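/- arXiv:1912.06620 — 4 statements merged into one kernel-verified Lean document; each statement's English description precedes it below -/
import Mathlib

section
/- For 0 < β < 1 and real numbers a < b, one has C_β ∫_{-∞}^{∞} |F1_{[a,b]}(ξ)|² |ξ|^{β-1} dξ = (4π / ((2-β)(1-β))) (b-a)^{2-β}, where F1_{[a,b]}(ξ) = ∫_a^b e^{-iξy} dy = (e^{-iξa} - e^{-iξb})/(iξ) is the Fourier transform of the indicator of [a,b]. -/
/-!
On the Fourier side `‖F 1_[a,b] ξ‖² = 2 (1 - cos ((b - a) ξ)) / ξ²`, so evenness and the scaling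
`u = (b - a) |ξ|` reduce the integral to `4 (b - a)^(2-β) J` with
`J = ∫₀^∞ (1 - cos u) u^(β-3) du`. To evaluate `J`, write
`u^(β-3) = Γ(3-β)⁻¹ ∫₀^∞ t^(2-β) e^(-ut) dt` and use `∫₀^∞ (1 - cos u) e^(-tu) du = 1/(t(1+t²))`;
swapping the integrals gives `Γ(3-β) J = ∫₀^∞ t^(1-β)/(1+t²) dt`, which in turn is a product of
two Gamma values after writing `1/(1+t²) = ∫₀^∞ e^(-(1+t²)r) dr` and swapping once more.
Legendre's duplication formula then matches `J` against the constant `C_β`.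
-/

open MeasureTheory Real

/-- The Fourier transform of the indicator of `[a, b]`. -/
noncomputable def fourierInd (a b ξ : ℝ) : ℂ :=
  (Complex.exp (-Complex.I * ξ * a) - Complex.exp (-Complex.I * ξ * b)) / (Complex.I * ξ)

open Set Function

theorem integrable_integral_and_integral_integral_swap_of_nonneg {X Y : Type*}
    [MeasurableSpace X] [MeasurableSpace Y] {μ : Measure X} {ν : Measure Y} [SFinite μ]
    [SFinite ν] {f : X → Y → ℝ} (hf : AEStronglyMeasurable (uncurry f) (μ.prod ν))
    (hf0 : ∀ᵐ x ∂μ, ∀ᵐ y ∂ν, 0 ≤ f x y) (hfx : ∀ᵐ x ∂μ, Integrable (f x) ν)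
    (hint : Integrable (fun x ↦ ∫ y, f x y ∂ν) μ) :
    Integrable (fun y ↦ ∫ x, f x y ∂μ) ν ∧
      ∫ x, ∫ y, f x y ∂ν ∂μ = ∫ y, ∫ x, f x y ∂μ ∂ν := by
  have hnorm : (fun x ↦ ∫ y, f x y ∂ν) =ᵐ[μ] fun x ↦ ∫ y, ‖uncurry f (x, y)‖ ∂ν := by
    filter_upwards [hf0] with x hx
    exact integral_congr_ae (hx.mono fun y hy ↦ (Real.norm_of_nonneg hy).symm)
  have hprod : Integrable (uncurry f) (μ.prod ν) :=
    (integrable_prod_iff hf).2 ⟨hfx, hint.congr hnorm⟩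
  exact ⟨hprod.integral_prod_right, integral_integral_swap hprod⟩

theorem integral_exp_neg_mul_Ioi {c : ℝ} (hc : 0 < c) : ∫ r in Ioi 0, exp (-c * r) = 1 / c := by
  rw [integral_exp_mul_Ioi (neg_neg_of_pos hc)]
  field_simp
  simp

theorem integrableOn_and_integral_exp_neg_mul_mul_cos {t : ℝ} (ht : 0 < t) :
    IntegrableOn (fun u ↦ exp (-t * u) * cos u) (Ioi 0) ∧
      ∫ u in Ioi 0, exp (-t * u) * cos u = t / (1 + t ^ 2) := by
  have ha : (-t + Complex.I).re < 0 := by simp [ht]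
  have hre : ∀ u : ℝ, exp (-t * u) * cos u = RCLike.re (Complex.exp ((-t + Complex.I) * u)) := by
    intro u
    simp [Complex.exp_re]
  have hint := integrableOn_exp_mul_complex_Ioi ha 0
  simp_rw [hre]
  refine ⟨hint.re, ?_⟩
  rw [integral_re hint, integral_exp_mul_complex_Ioi ha]
  simp [Complex.div_re, Complex.normSq]
  field_simp
  ring

theorem integrableOn_and_integral_exp_neg_mul_mul_one_sub_cos {t : ℝ} (ht : 0 < t) :
    IntegrableOn (fun u ↦ exp (-t * u) * (1 - cos u)) (Ioi 0) ∧
      ∫ u in Ioi 0, exp (-t * u) * (1 - cos u) = 1 / (t * (1 + t ^ 2)) := by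
  obtain ⟨hcos, hcos_eq⟩ := integrableOn_and_integral_exp_neg_mul_mul_cos ht
  have hexp : IntegrableOn (fun u ↦ exp (-t * u)) (Ioi 0) := exp_neg_integrableOn_Ioi 0 ht
  simp_rw [mul_one_sub]
  refine ⟨hexp.sub hcos, ?_⟩
  rw [integral_sub hexp hcos, hcos_eq, integral_exp_neg_mul_Ioi ht]
  field_simp
  ring

theorem integrableOn_and_integral_rpow_div_one_add_sq {s : ℝ} (hs0 : 0 < s) (hs2 : s < 2) :
    IntegrableOn (fun t : ℝ ↦ t ^ (s - 1) / (1 + t ^ 2)) (Ioi 0) ∧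
      ∫ t in Ioi (0:ℝ), t ^ (s - 1) / (1 + t ^ 2) = Gamma (s / 2) * Gamma (1 - s / 2) / 2 := by
  set F : ℝ → ℝ → ℝ := fun r t ↦ exp (-r) * (t ^ (s - 1) * exp (-r * t ^ (2:ℝ)))
  have hF_t : ∀ r ∈ Ioi (0:ℝ),
      ∫ t in Ioi 0, F r t = exp (-r) * r ^ ((1 - s / 2) - 1) * (Gamma (s / 2) / 2) := by
    intro r hr
    rw [integral_const_mul, integral_rpow_mul_exp_neg_mul_rpow two_pos (by linarith) hr]
    ring_nf
  have hF_r : ∀ t ∈ Ioi (0:ℝ), ∫ r in Ioi 0, F r t = t ^ (s - 1) / (1 + t ^ 2) := by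
    intro t ht
    have h : ∀ r, F r t = t ^ (s - 1) * exp (-(1 + t ^ 2) * r) := by
      intro r
      simp only [F, rpow_two]
      rw [mul_left_comm, ← exp_add]
      ring_nf
    simp_rw [h]
    rw [integral_const_mul, integral_exp_neg_mul_Ioi (by positivity)]
    ring
  obtain ⟨hint, heq⟩ := integrable_integral_and_integral_integral_swap_of_nonneg
    (μ := volume.restrict (Ioi 0)) (ν := volume.restrict (Ioi 0)) (f := F)
    (by fun_prop)
    (ae_restrict_of_forall_mem measurableSet_Ioi fun r _ ↦
      ae_restrict_of_forall_mem measurableSet_Ioi fun t ht ↦ by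
        have : (0:ℝ) < t := ht
        positivity)
    (ae_restrict_of_forall_mem measurableSet_Ioi fun r hr ↦
      (integrableOn_rpow_mul_exp_neg_mul_rpow (by linarith) two_pos hr).const_mul _)
    (IntegrableOn.congr_fun ((GammaIntegral_convergent (by linarith : 0 < 1 - s / 2)).mul_const _)
      (fun r hr ↦ (hF_t r hr).symm) measurableSet_Ioi)
  refine ⟨IntegrableOn.congr_fun hint hF_r measurableSet_Ioi, ?_⟩
  rw [← setIntegral_congr_fun measurableSet_Ioi hF_r, ← heq,
    setIntegral_congr_fun measurableSet_Ioi hF_t, integral_mul_const,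
    ← Gamma_eq_integral (by linarith)]
  ring

theorem integral_one_sub_cos_mul_rpow {β : ℝ} (hβ0 : 0 < β) (hβ2 : β < 2) :
    ∫ u in Ioi (0:ℝ), (1 - cos u) * u ^ (β - 3) =
      Gamma ((2 - β) / 2) * Gamma (β / 2) / (2 * Gamma (3 - β)) := by
  obtain ⟨hK, hK_eq⟩ := integrableOn_and_integral_rpow_div_one_add_sq
    (by linarith : 0 < 2 - β) (by linarith)
  set F : ℝ → ℝ → ℝ := fun t u ↦ t ^ (2 - β) * (exp (-t * u) * (1 - cos u))
  have hF_u : ∀ t ∈ Ioi (0:ℝ), ∫ u in Ioi 0, F t u = t ^ (2 - β - 1) / (1 + t ^ 2) := by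
    intro t ht
    rw [integral_const_mul, (integrableOn_and_integral_exp_neg_mul_mul_one_sub_cos ht).2,
      rpow_sub ht (2 - β) 1, rpow_one]
    field_simp
  have hF_t : ∀ u ∈ Ioi (0:ℝ),
      ∫ t in Ioi 0, F t u = Gamma (3 - β) * ((1 - cos u) * u ^ (β - 3)) := by
    intro u hu
    have h : ∀ t, F t u = (1 - cos u) * (t ^ ((3 - β) - 1) * exp (-(u * t))) := by
      intro t
      simp only [F]
      ring_nf
    simp_rw [h]
    rw [integral_const_mul, integral_rpow_mul_exp_neg_mul_Ioi (by linarith) hu, one_div,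
      inv_rpow hu.le, ← rpow_neg hu.le]
    ring_nf
  obtain ⟨-, heq⟩ := integrable_integral_and_integral_integral_swap_of_nonneg
    (μ := volume.restrict (Ioi 0)) (ν := volume.restrict (Ioi 0)) (f := F)
    (by fun_prop)
    (ae_restrict_of_forall_mem measurableSet_Ioi fun t ht ↦
      ae_restrict_of_forall_mem measurableSet_Ioi fun u _ ↦ by
        have : (0:ℝ) < t := ht
        have : 0 ≤ 1 - cos u := sub_nonneg.2 (cos_le_one u)
        positivity)
    (ae_restrict_of_forall_mem measurableSet_Ioi fun t ht ↦
      (integrableOn_and_integral_exp_neg_mul_mul_one_sub_cos ht).1.const_mul _)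
    (IntegrableOn.congr_fun hK (fun t ht ↦ (hF_u t ht).symm) measurableSet_Ioi)
  rw [setIntegral_congr_fun measurableSet_Ioi hF_u, setIntegral_congr_fun measurableSet_Ioi hF_t,
    integral_const_mul, hK_eq, show 1 - (2 - β) / 2 = β / 2 by ring] at heq
  rw [eq_div_iff (mul_ne_zero two_ne_zero (Gamma_pos_of_pos (by linarith)).ne')]
  linear_combination -2 * heq

theorem sqrt_pi_mul_Gamma_div_Gamma_mul_integral_one_sub_cos_mul_rpow {β : ℝ} (hβ0 : 0 < β)
    (hβ1 : β < 1) :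
    √π * 2 ^ (1 - β) * Gamma ((1 - β) / 2) / Gamma (β / 2) *
        ∫ u in Ioi (0:ℝ), (1 - cos u) * u ^ (β - 3) = π / ((2 - β) * (1 - β)) := by
  have hdup := Gamma_mul_Gamma_add_half ((1 - β) / 2)
  rw [show (1 - β) / 2 + 1 / 2 = (2 - β) / 2 by ring, show 2 * ((1 - β) / 2) = 1 - β by ring,
    show 1 - (1 - β) = β by ring] at hdup
  have hrec : Gamma (3 - β) = (2 - β) * ((1 - β) * Gamma (1 - β)) := by
    rw [show 3 - β = (1 - β) + 1 + 1 by ring, Gamma_add_one (by linarith),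
      Gamma_add_one (by linarith)]
    ring_nf
  have h2 : (2:ℝ) ^ (1 - β) * 2 ^ β = 2 := by
    rw [← rpow_add two_pos]; norm_num
  have hsq : √π * √π = π := mul_self_sqrt pi_nonneg
  have hΓβ : Gamma (β / 2) ≠ 0 := (Gamma_pos_of_pos (by linarith)).ne'
  have hΓ1β : Gamma (1 - β) ≠ 0 := (Gamma_pos_of_pos (by linarith)).ne'
  rw [integral_one_sub_cos_mul_rpow hβ0 (by linarith), hrec]
  field_simp [show 1 - β ≠ 0 by linarith, show 2 - β ≠ 0 by linarith]
  linear_combination (√π * 2 ^ (1 - β)) * hdup + (Gamma (1 - β) * π) * h2 +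
    (Gamma (1 - β) * 2 ^ (1 - β) * 2 ^ β) * hsq

theorem norm_fourierInd (a b ξ : ℝ) :
    ‖fourierInd a b ξ‖ = |2 * sin ((b - a) * ξ / 2)| / |ξ| := by
  have h : Complex.exp (-Complex.I * ξ * a) - Complex.exp (-Complex.I * ξ * b) =
      Complex.exp (↑(-(ξ * b)) * Complex.I) * (Complex.exp (Complex.I * ↑((b - a) * ξ)) - 1) := by
    rw [mul_sub, ← Complex.exp_add]
    push_cast
    ring_nf
  rw [fourierInd, norm_div, h, norm_mul, Complex.norm_exp_I_mul_ofReal_sub_one,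
    Complex.norm_exp_ofReal_mul_I]
  simp

theorem sq_norm_fourierInd_mul_rpow (a b β ξ : ℝ) :
    ‖fourierInd a b ξ‖ ^ 2 * |ξ| ^ (β - 1) = 2 * ((1 - cos ((b - a) * |ξ|)) * |ξ| ^ (β - 3)) := by
  rcases eq_or_ne ξ 0 with rfl | hξ
  · simp [fourierInd]
  have hcos : cos ((b - a) * |ξ|) = cos ((b - a) * ξ) := by
    rcases abs_cases ξ with ⟨h, _⟩ | ⟨h, _⟩ <;> simp [h]
  have hpow : |ξ| ^ (β - 3) = |ξ| ^ (β - 1) / |ξ| ^ 2 := by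
    rw [show β - 3 = β - 1 - 2 by ring, rpow_sub (abs_pos.2 hξ), rpow_two]
  have hsin : (2 * sin ((b - a) * ξ / 2)) ^ 2 = 2 * (1 - cos ((b - a) * ξ)) := by
    have hcos2 := cos_sq ((b - a) * ξ / 2)
    rw [show 2 * ((b - a) * ξ / 2) = (b - a) * ξ by ring] at hcos2
    linear_combination 4 * sin_sq_add_cos_sq ((b - a) * ξ / 2) - 4 * hcos2
  rw [norm_fourierInd, div_pow, sq_abs, hsin, hcos, hpow, sq_abs]
  field_simp

theorem integral_comp_mul_left_mul_rpow_Ioi (g : ℝ → ℝ) (p : ℝ) {L : ℝ} (hL : 0 < L) :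
    ∫ x in Ioi (0:ℝ), g (L * x) * x ^ p = L ^ (-(p + 1)) * ∫ u in Ioi (0:ℝ), g u * u ^ p := by
  have h : ∀ x ∈ Ioi (0:ℝ), g (L * x) * x ^ p = L ^ (-p) * (g (L * x) * (L * x) ^ p) := by
    intro x hx
    rw [mul_rpow hL.le (le_of_lt hx), rpow_neg hL.le]
    field_simp
  rw [setIntegral_congr_fun measurableSet_Ioi h, integral_const_mul,
    integral_comp_mul_left_Ioi (fun u ↦ g u * u ^ p) 0 hL, mul_zero, smul_eq_mul, ← mul_assoc,
    rpow_neg hL.le, rpow_neg hL.le, rpow_add hL, rpow_one, mul_inv]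

theorem integral_sq_norm_fourierInd_mul_rpow (β : ℝ) {a b : ℝ} (hab : a < b) :
    ∫ ξ : ℝ, ‖fourierInd a b ξ‖ ^ 2 * |ξ| ^ (β - 1) =
      4 * (b - a) ^ (2 - β) * ∫ u in Ioi (0:ℝ), (1 - cos u) * u ^ (β - 3) := by
  simp_rw [sq_norm_fourierInd_mul_rpow]
  rw [integral_const_mul, integral_comp_abs (f := fun x ↦ (1 - cos ((b - a) * x)) * x ^ (β - 3)),
    integral_comp_mul_left_mul_rpow_Ioi (fun u ↦ 1 - cos u) _ (sub_pos.2 hab)]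
  ring_nf

theorem stmt1 (β a b : ℝ) (hβ0 : 0 < β) (hβ1 : β < 1) (hab : a < b) :
    (Real.sqrt Real.pi * 2 ^ ((1:ℝ) - β) * Real.Gamma ((1 - β) / 2) / Real.Gamma (β / 2)) *
      (∫ ξ : ℝ, ‖fourierInd a b ξ‖ ^ 2 * |ξ| ^ (β - 1))
      = (4 * Real.pi / ((2 - β) * (1 - β))) * (b - a) ^ ((2:ℝ) - β) := by
  rw [integral_sq_norm_fourierInd_mul_rpow β hab, mul_left_comm,
    sqrt_pi_mul_Gamma_div_Gamma_mul_integral_one_sub_cos_mul_rpow hβ0 hβ1]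
  ring
end

section
/- Define p(r) = ∫_{γ₁}^{∞} ∫_{γ₂}^{∞} g(x,y;r) dx dy, where g is the standard bivariate Gaussian density with correlation r ∈ (-1,1) and γ₁, γ₂ > 0 are fixed. Then p is differentiable on (-1,1) with p'(r) = g(γ₁, γ₂; r). -/
open MeasureTheory Real

/-- The standard bivariate Gaussian density with correlation `ρ`. -/
noncomputable def bivGauss (x y ρ : ℝ) : ℝ :=
  (1 / (2 * Real.pi * Real.sqrt (1 - ρ ^ 2))) *
    Real.exp (-(x ^ 2 + y ^ 2 - 2 * ρ * x * y) / (2 * (1 - ρ ^ 2)))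

/-!
The density satisfies the heat-type identity `∂g/∂ρ = ∂²g/∂x∂y`. For `|ρ| ≤ a < 1`, `g` and
its first two derivatives are dominated by `C (1 + 2x²)(1 + 2y²) exp (-(1 - a)(x² + y²)/2)`,
an integrable function, so one may differentiate under the integral sign; integrating
`∂²g/∂x∂y` over `(γ₁, ∞) × (γ₂, ∞)` by the fundamental theorem of calculus in each variable
then leaves only the corner value `g(γ₁, γ₂; ρ)`, since the boundary terms at infinity vanish.
-/

open Filter Topology Set

noncomputable def bivGaussDx (x y ρ : ℝ) : ℝ :=
  bivGauss x y ρ * ((ρ * y - x) / (1 - ρ ^ 2))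

noncomputable def bivGaussDxDy (x y ρ : ℝ) : ℝ :=
  bivGauss x y ρ * (((ρ * y - x) * (ρ * x - y) + ρ * (1 - ρ ^ 2)) / (1 - ρ ^ 2) ^ 2)

section Derivatives

variable {x y ρ : ℝ}

lemma hasDerivAt_bivGauss_fst (hρ : 1 - ρ ^ 2 ≠ 0) :
    HasDerivAt (bivGauss · y ρ) (bivGaussDx x y ρ) x := by
  have hQ : HasDerivAt (fun x => x ^ 2 + y ^ 2 - 2 * ρ * x * y) (2 * x - 2 * ρ * y) x :=
    (((hasDerivAt_pow 2 x).add_const (y ^ 2)).sub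
      (((hasDerivAt_id x).const_mul (2 * ρ)).mul_const y)).congr_deriv (by simp)
  refine ((hQ.neg.div_const (2 * (1 - ρ ^ 2))).exp.const_mul
    (1 / (2 * π * √(1 - ρ ^ 2)))).congr_deriv ?_
  simp only [bivGaussDx, bivGauss, Pi.neg_apply]
  field_simp
  ring

lemma hasDerivAt_bivGaussDx_snd (hρ : 1 - ρ ^ 2 ≠ 0) :
    HasDerivAt (bivGaussDx x · ρ) (bivGaussDxDy x y ρ) y := by
  have hQ : HasDerivAt (fun y => x ^ 2 + y ^ 2 - 2 * ρ * x * y) (2 * y - 2 * ρ * x) y :=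
    (((hasDerivAt_pow 2 y).const_add (x ^ 2)).sub
      ((hasDerivAt_id y).const_mul (2 * ρ * x))).congr_deriv (by simp)
  have hG := (hQ.neg.div_const (2 * (1 - ρ ^ 2))).exp.const_mul (1 / (2 * π * √(1 - ρ ^ 2)))
  have hL := (((hasDerivAt_id y).const_mul ρ).sub_const x).div_const (1 - ρ ^ 2)
  refine (hG.mul hL).congr_deriv ?_
  simp only [bivGaussDxDy, bivGauss, Pi.neg_apply, id]
  field_simp
  ring

lemma hasDerivAt_bivGauss_corr (hρ : 0 < 1 - ρ ^ 2) :
    HasDerivAt (bivGauss x y ·) (bivGaussDxDy x y ρ) ρ := by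
  have hs : HasDerivAt (fun ρ => 1 - ρ ^ 2) (-(2 * ρ)) ρ := by
    simpa using (hasDerivAt_pow 2 ρ).const_sub 1
  have hsqrt : √(1 - ρ ^ 2) ^ 2 = 1 - ρ ^ 2 := sq_sqrt hρ.le
  have hc := (hasDerivAt_const ρ (1 : ℝ)).div ((hs.sqrt hρ.ne').const_mul (2 * π))
    (by positivity)
  have hQ : HasDerivAt (fun ρ => x ^ 2 + y ^ 2 - 2 * ρ * x * y) (-(2 * x * y)) ρ :=
    ((((hasDerivAt_id ρ).const_mul 2).mul_const x).mul_const y |>.const_sub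
      (x ^ 2 + y ^ 2)).congr_deriv (by simp)
  have hE := hQ.neg.div (hs.const_mul 2) (by positivity)
  refine (hc.mul hE.exp).congr_deriv ?_
  simp only [bivGaussDxDy, bivGauss, Pi.neg_apply, Pi.div_apply]
  field_simp
  linear_combination (-ρ * (1 - ρ ^ 2)) * hsqrt

end Derivatives

noncomputable def gaussEnvelope (b x : ℝ) : ℝ := (1 + 2 * x ^ 2) * exp (-b * x ^ 2)

section Envelope

variable {b : ℝ}

lemma integrable_gaussEnvelope (hb : 0 < b) : Integrable (gaussEnvelope b) := by
  have h2 : Integrable fun x : ℝ => x ^ (2 : ℝ) * exp (-b * x ^ 2) :=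
    integrable_rpow_mul_exp_neg_mul_sq hb (by norm_num)
  refine ((integrable_exp_neg_mul_sq hb).add (h2.const_mul 2)).congr (ae_of_all _ fun x => ?_)
  simp only [gaussEnvelope, Pi.add_apply, rpow_two]
  ring

lemma tendsto_gaussEnvelope_cocompact (hb : 0 < b) :
    Tendsto (gaussEnvelope b) (cocompact ℝ) (𝓝 0) := by
  have h := (tendsto_rpow_abs_mul_exp_neg_mul_sq_cocompact hb 0).add
    ((tendsto_rpow_abs_mul_exp_neg_mul_sq_cocompact hb 2).const_mul 2)
  have heq (x : ℝ) : |x| ^ (0 : ℝ) * exp (-b * x ^ 2) + 2 * (|x| ^ (2 : ℝ) * exp (-b * x ^ 2)) =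
      gaussEnvelope b x := by
    rw [rpow_zero, rpow_two, sq_abs, gaussEnvelope]; ring
  simpa only [heq, mul_zero, add_zero] using h

lemma integrable_gaussEnvelope_prod (hb : 0 < b) :
    Integrable fun z : ℝ × ℝ => gaussEnvelope b z.1 * gaussEnvelope b z.2 :=
  (integrable_gaussEnvelope hb).mul_prod (integrable_gaussEnvelope hb)

lemma integral_Ioi_of_hasDerivAt_of_le_gaussEnvelope {f f' : ℝ → ℝ} {C C' : ℝ} (hb : 0 < b)
    (hf : ∀ x, HasDerivAt f (f' x) x) (hfC : ∀ x, |f x| ≤ C * gaussEnvelope b x)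
    (hf'C : ∀ x, |f' x| ≤ C' * gaussEnvelope b x) (γ : ℝ) :
    ∫ x in Ioi γ, f' x = -f γ := by
  have hderiv : deriv f = f' := funext fun x => (hf x).deriv
  have hint : Integrable f' :=
    ((integrable_gaussEnvelope hb).const_mul C').mono'
      (hderiv ▸ measurable_deriv f).aestronglyMeasurable (ae_of_all _ hf'C)
  have hlim : Tendsto f atTop (𝓝 0) :=
    squeeze_zero_norm hfC (by simpa using
      ((tendsto_gaussEnvelope_cocompact hb).mono_left atTop_le_cocompact).const_mul C)
  simpa using integral_Ioi_of_hasDerivAt_of_tendsto' (fun x _ => hf x) hint.integrableOn hlim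

end Envelope

section Bounds

variable {a ρ : ℝ}

lemma one_sub_sq_pos_of_abs_lt (hρ : |ρ| < 1) : 0 < 1 - ρ ^ 2 :=
  sub_pos.2 ((sq_lt_one_iff_abs_lt_one ρ).2 hρ)

lemma one_sub_sq_le_one_sub_sq (hρ : |ρ| ≤ a) : 1 - a ^ 2 ≤ 1 - ρ ^ 2 := by
  have := abs_nonneg ρ
  nlinarith [sq_abs ρ]

lemma one_sub_sq_pos_of_abs_le (ha : a < 1) (hρ : |ρ| ≤ a) : 0 < 1 - a ^ 2 := by
  have := (abs_nonneg ρ).trans hρ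
  nlinarith

lemma one_sub_mul_sq_add_sq_le (hρ : |ρ| ≤ a) (x y : ℝ) :
    (1 - a) * (x ^ 2 + y ^ 2) ≤ x ^ 2 + y ^ 2 - 2 * ρ * x * y := by
  obtain ⟨h₁, h₂⟩ := abs_le.1 hρ
  nlinarith [mul_nonneg (sub_nonneg.2 h₂) (sq_nonneg (x + y)),
    mul_nonneg (neg_le_iff_add_nonneg.1 h₁) (sq_nonneg (x - y))]

lemma bivGauss_le (ha : a < 1) (hρ : |ρ| ≤ a) (x y : ℝ) :
    bivGauss x y ρ ≤ 1 / (2 * π * √(1 - a ^ 2)) *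
      (exp (-((1 - a) / 2) * x ^ 2) * exp (-((1 - a) / 2) * y ^ 2)) := by
  have hsa := one_sub_sq_pos_of_abs_le ha hρ
  have hsρ := one_sub_sq_le_one_sub_sq hρ
  have hs : 0 < 1 - ρ ^ 2 := hsa.trans_le hsρ
  have hQ := one_sub_mul_sq_add_sq_le hρ x y
  have hexp : -(x ^ 2 + y ^ 2 - 2 * ρ * x * y) / (2 * (1 - ρ ^ 2)) ≤
      -((1 - a) / 2) * x ^ 2 + -((1 - a) / 2) * y ^ 2 := by
    rw [div_le_iff₀ (by positivity)]
    nlinarith [mul_nonneg (sub_nonneg.2 hQ) (sq_nonneg ρ),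
      mul_nonneg (mul_nonneg (sub_nonneg.2 ha.le) (add_nonneg (sq_nonneg x) (sq_nonneg y)))
        (sq_nonneg ρ)]
  rw [bivGauss, ← exp_add]
  gcongr

lemma abs_bivGauss_mul_div_pow_le (ha : a < 1) (hρ : |ρ| ≤ a) {x y q : ℝ}
    (hq : |q| ≤ (1 + 2 * x ^ 2) * (1 + 2 * y ^ 2)) (k : ℕ) :
    |bivGauss x y ρ * (q / (1 - ρ ^ 2) ^ k)| ≤
      1 / (2 * π * √(1 - a ^ 2)) / (1 - a ^ 2) ^ k *
        (gaussEnvelope ((1 - a) / 2) x * gaussEnvelope ((1 - a) / 2) y) := by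
  have hsa := one_sub_sq_pos_of_abs_le ha hρ
  have hsρ := one_sub_sq_le_one_sub_sq hρ
  have hs : 0 < 1 - ρ ^ 2 := hsa.trans_le hsρ
  have hg : 0 ≤ bivGauss x y ρ := by unfold bivGauss; positivity
  rw [abs_mul, abs_of_nonneg hg, abs_div, abs_of_nonneg (pow_nonneg hs.le k)]
  calc bivGauss x y ρ * (|q| / (1 - ρ ^ 2) ^ k)
      ≤ 1 / (2 * π * √(1 - a ^ 2)) * (exp (-((1 - a) / 2) * x ^ 2) *
          exp (-((1 - a) / 2) * y ^ 2)) *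
          ((1 + 2 * x ^ 2) * (1 + 2 * y ^ 2) / (1 - a ^ 2) ^ k) := by
        gcongr ?_ * (?_ / ?_)
        · exact bivGauss_le ha hρ x y
        · exact pow_le_pow_left₀ hsa.le hsρ k
    _ = _ := by simp only [gaussEnvelope]; ring

lemma abs_bivGauss_le (ha : a < 1) (hρ : |ρ| ≤ a) (x y : ℝ) :
    |bivGauss x y ρ| ≤ 1 / (2 * π * √(1 - a ^ 2)) *
      (gaussEnvelope ((1 - a) / 2) x * gaussEnvelope ((1 - a) / 2) y) := by
  have h1 : |(1 : ℝ)| ≤ (1 + 2 * x ^ 2) * (1 + 2 * y ^ 2) := by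
    rw [abs_one]; nlinarith [sq_nonneg x, sq_nonneg y, mul_nonneg (sq_nonneg x) (sq_nonneg y)]
  simpa using abs_bivGauss_mul_div_pow_le ha hρ h1 0

lemma abs_bivGaussDx_le (ha : a < 1) (hρ : |ρ| ≤ a) (x y : ℝ) :
    |bivGaussDx x y ρ| ≤ 1 / (2 * π * √(1 - a ^ 2)) / (1 - a ^ 2) *
      (gaussEnvelope ((1 - a) / 2) x * gaussEnvelope ((1 - a) / 2) y) := by
  have hρ1 : |ρ| ≤ 1 := hρ.trans ha.le
  have hq : |ρ * y - x| ≤ (1 + 2 * x ^ 2) * (1 + 2 * y ^ 2) := by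
    have : |ρ * y| ≤ |y| := by rw [abs_mul]; exact mul_le_of_le_one_left (abs_nonneg y) hρ1
    nlinarith [abs_sub (ρ * y) x, sq_nonneg (2 * |x| - 1), sq_nonneg (2 * |y| - 1), sq_abs x,
      sq_abs y, mul_nonneg (sq_nonneg x) (sq_nonneg y)]
  simpa only [pow_one, bivGaussDx] using abs_bivGauss_mul_div_pow_le ha hρ hq 1

lemma abs_bivGaussDxDy_le (ha : a < 1) (hρ : |ρ| ≤ a) (x y : ℝ) :
    |bivGaussDxDy x y ρ| ≤ 1 / (2 * π * √(1 - a ^ 2)) / (1 - a ^ 2) ^ 2 *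
      (gaussEnvelope ((1 - a) / 2) x * gaussEnvelope ((1 - a) / 2) y) := by
  have hρ1 : |ρ| ≤ 1 := hρ.trans ha.le
  have h₁ : |ρ * y - x| ≤ |x| + |y| := by
    have : |ρ * y| ≤ |y| := by rw [abs_mul]; exact mul_le_of_le_one_left (abs_nonneg y) hρ1
    linarith [abs_sub (ρ * y) x]
  have h₂ : |ρ * x - y| ≤ |x| + |y| := by
    have : |ρ * x| ≤ |x| := by rw [abs_mul]; exact mul_le_of_le_one_left (abs_nonneg x) hρ1
    linarith [abs_sub (ρ * x) y]
  have h₃ : |ρ * (1 - ρ ^ 2)| ≤ 1 := by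
    rw [abs_mul, abs_of_nonneg (by nlinarith [sq_abs ρ, abs_nonneg ρ] : 0 ≤ 1 - ρ ^ 2)]
    nlinarith [abs_nonneg ρ, sq_nonneg ρ]
  have hq : |(ρ * y - x) * (ρ * x - y) + ρ * (1 - ρ ^ 2)| ≤
      (1 + 2 * x ^ 2) * (1 + 2 * y ^ 2) := by
    calc _ ≤ |ρ * y - x| * |ρ * x - y| + |ρ * (1 - ρ ^ 2)| := by
          rw [← abs_mul]; exact abs_add_le _ _
      _ ≤ (|x| + |y|) * (|x| + |y|) + 1 := by gcongr
      _ ≤ (1 + 2 * x ^ 2) * (1 + 2 * y ^ 2) := by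
          nlinarith [sq_nonneg (|x| - |y|), sq_abs x, sq_abs y, sq_nonneg (x * y)]
  exact abs_bivGauss_mul_div_pow_le ha hρ hq 2

end Bounds

section Integrals

variable {ρ : ℝ}

lemma integrable_bivGauss (hρ : |ρ| < 1) : Integrable fun z : ℝ × ℝ => bivGauss z.1 z.2 ρ :=
  ((integrable_gaussEnvelope_prod (by linarith)).const_mul _).mono'
    (by unfold bivGauss; fun_prop : Continuous _).aestronglyMeasurable
    (ae_of_all _ fun z => abs_bivGauss_le hρ le_rfl z.1 z.2)

lemma integrable_bivGaussDxDy (hρ : |ρ| < 1) :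
    Integrable fun z : ℝ × ℝ => bivGaussDxDy z.1 z.2 ρ :=
  ((integrable_gaussEnvelope_prod (by linarith)).const_mul _).mono'
    (by unfold bivGaussDxDy bivGauss; fun_prop : Continuous _).aestronglyMeasurable
    (ae_of_all _ fun z => abs_bivGaussDxDy_le hρ le_rfl z.1 z.2)

lemma integral_Ioi_bivGaussDxDy (hρ : |ρ| < 1) (x γ : ℝ) :
    ∫ y in Ioi γ, bivGaussDxDy x y ρ = -bivGaussDx x γ ρ :=
  integral_Ioi_of_hasDerivAt_of_le_gaussEnvelope (by linarith)
    (fun _ => hasDerivAt_bivGaussDx_snd (one_sub_sq_pos_of_abs_lt hρ).ne')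
    (fun y => (abs_bivGaussDx_le hρ le_rfl x y).trans_eq (mul_assoc _ _ _).symm)
    (fun y => (abs_bivGaussDxDy_le hρ le_rfl x y).trans_eq (mul_assoc _ _ _).symm) γ

lemma integral_Ioi_bivGaussDx (hρ : |ρ| < 1) (γ y : ℝ) :
    ∫ x in Ioi γ, bivGaussDx x y ρ = -bivGauss γ y ρ :=
  integral_Ioi_of_hasDerivAt_of_le_gaussEnvelope (b := (1 - |ρ|) / 2) (by linarith)
    (fun _ => hasDerivAt_bivGauss_fst (one_sub_sq_pos_of_abs_lt hρ).ne')
    (fun x => (abs_bivGauss_le hρ le_rfl x y).trans_eq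
      (by rw [mul_comm (gaussEnvelope _ x), ← mul_assoc]))
    (fun x => (abs_bivGaussDx_le hρ le_rfl x y).trans_eq
      (by rw [mul_comm (gaussEnvelope _ x), ← mul_assoc])) γ

lemma integral_Ioi_integral_Ioi_bivGaussDxDy (hρ : |ρ| < 1) (γ₁ γ₂ : ℝ) :
    ∫ x in Ioi γ₁, ∫ y in Ioi γ₂, bivGaussDxDy x y ρ = bivGauss γ₁ γ₂ ρ := by
  simp only [integral_Ioi_bivGaussDxDy hρ, integral_neg, integral_Ioi_bivGaussDx hρ, neg_neg]

end Integrals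

lemma hasDerivAt_setIntegral_bivGauss (u : Set (ℝ × ℝ)) {r : ℝ} (hr : |r| < 1) :
    HasDerivAt (fun ρ => ∫ z in u, bivGauss z.1 z.2 ρ) (∫ z in u, bivGaussDxDy z.1 z.2 r) r := by
  set a := (1 + |r|) / 2 with ha_def
  have ha : a < 1 := by linarith
  have hra : 0 < a - |r| := by linarith
  have hball : ∀ ρ ∈ Metric.ball r (a - |r|), |ρ| ≤ a := fun ρ hρ => by
    have := abs_sub_abs_le_abs_sub ρ r
    rw [Metric.mem_ball, dist_eq] at hρ
    linarith
  have hmeas : ∀ ρ, AEStronglyMeasurable (fun z : ℝ × ℝ => bivGauss z.1 z.2 ρ)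
      (volume.restrict u) := fun ρ =>
    (by unfold bivGauss; fun_prop : Continuous fun z : ℝ × ℝ => bivGauss z.1 z.2 ρ)
      |>.aestronglyMeasurable
  have hbound : ∀ z : ℝ × ℝ, ∀ ρ ∈ Metric.ball r (a - |r|), ‖bivGaussDxDy z.1 z.2 ρ‖ ≤
      1 / (2 * π * √(1 - a ^ 2)) / (1 - a ^ 2) ^ 2 *
        (gaussEnvelope ((1 - a) / 2) z.1 * gaussEnvelope ((1 - a) / 2) z.2) :=
    fun z ρ hρ => abs_bivGaussDxDy_le ha (hball ρ hρ) z.1 z.2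
  have hderiv : ∀ z : ℝ × ℝ, ∀ ρ ∈ Metric.ball r (a - |r|),
      HasDerivAt (bivGauss z.1 z.2 ·) (bivGaussDxDy z.1 z.2 ρ) ρ :=
    fun z ρ hρ => hasDerivAt_bivGauss_corr (one_sub_sq_pos_of_abs_lt ((hball ρ hρ).trans_lt ha))
  exact (hasDerivAt_integral_of_dominated_loc_of_deriv_le (Metric.ball_mem_nhds r hra)
    (Eventually.of_forall hmeas) (integrable_bivGauss hr).integrableOn
    (integrable_bivGaussDxDy hr).integrableOn.aestronglyMeasurable (ae_of_all _ hbound)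
    ((integrable_gaussEnvelope_prod (by linarith)).const_mul _).integrableOn
    (ae_of_all _ hderiv)).2

theorem stmt6_general (γ₁ γ₂ : ℝ) (r : ℝ) (hr₁ : -1 < r) (hr₂ : r < 1) :
    HasDerivAt (fun ρ => ∫ x in Set.Ioi γ₁, ∫ y in Set.Ioi γ₂, bivGauss x y ρ)
      (bivGauss γ₁ γ₂ r) r := by
  have hr : |r| < 1 := abs_lt.2 ⟨hr₁, hr₂⟩
  have hfubini : (fun ρ => ∫ z in Ioi γ₁ ×ˢ Ioi γ₂, bivGauss z.1 z.2 ρ) =ᶠ[𝓝 r]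
      fun ρ => ∫ x in Ioi γ₁, ∫ y in Ioi γ₂, bivGauss x y ρ := by
    filter_upwards [Ioo_mem_nhds hr₁ hr₂] with ρ hρ
    exact setIntegral_prod _ (integrable_bivGauss (abs_lt.2 hρ)).integrableOn
  have hderiv := (hasDerivAt_setIntegral_bivGauss (Ioi γ₁ ×ˢ Ioi γ₂) hr).congr_of_eventuallyEq
    hfubini.symm
  rwa [Measure.volume_eq_prod, setIntegral_prod _ (integrable_bivGaussDxDy hr).integrableOn,
    integral_Ioi_integral_Ioi_bivGaussDxDy hr] at hderiv

theorem stmt6 (γ₁ γ₂ : ℝ) (hγ₁ : 0 < γ₁) (hγ₂ : 0 < γ₂) (r : ℝ) (hr₁ : -1 < r) (hr₂ : r < 1) :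
    HasDerivAt (fun ρ => ∫ x in Set.Ioi γ₁, ∫ y in Set.Ioi γ₂, bivGauss x y ρ)
      (bivGauss γ₁ γ₂ r) r :=
  stmt6_general γ₁ γ₂ r hr₁ hr₂
end

section
/- Let (A_n)_{n≥1} be events in a probability space such that ∑_{n=1}^{∞} P(A_n) = ∞ and liminf_{n→∞} ( ∑_{j=1}^n ∑_{k=1}^n P(A_j ∩ A_k) ) / ( ∑_{j=1}^n P(A_j) )² = 1. Then P(A_n occurs infinitely often) = 1. -/
/-!
Second-moment method. For `N = ∑ k ∈ s, 𝟙_{A k}`, Cauchy–Schwarz applied to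
`N = N · 𝟙_{⋃ k ∈ s, A k}` gives
`(∑ k ∈ s, P (A k))² ≤ (∑ j ∈ s, ∑ k ∈ s, P (A j ∩ A k)) · P (⋃ k ∈ s, A k)`.
Taking for `s` the indices in `[1, n]` that are at least `m`, the tail `⋃ i ≥ m, A i` has
probability at least `(S n - C)² / D n`, where `S n = ∑ j ∈ [1, n], P (A j)`,
`D n = ∑ j, k ∈ [1, n], P (A j ∩ A k)` and `C` depends only on `m`. Since `S n → ∞` and
`D n / S n²` comes arbitrarily close to `1` infinitely often, every tail has probability `1`,
and so does their intersection `limsup A`.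
-/

open MeasureTheory Filter Set
open scoped ENNReal

namespace ENNReal

theorem sq_lintegral_mul_le_mul_lintegral_sq {α : Type*} [MeasurableSpace α] {μ : Measure α}
    {f g : α → ℝ≥0∞} (hf : AEMeasurable f μ) (hg : AEMeasurable g μ) :
    (∫⁻ a, f a * g a ∂μ) ^ 2 ≤ (∫⁻ a, f a ^ 2 ∂μ) * ∫⁻ a, g a ^ 2 ∂μ := by
  have h := lintegral_mul_le_Lp_mul_Lq μ Real.HolderConjugate.two_two hf hg
  simp only [rpow_two] at h
  calc (∫⁻ a, f a * g a ∂μ) ^ 2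
      ≤ ((∫⁻ a, f a ^ 2 ∂μ) ^ (1 / 2 : ℝ) * (∫⁻ a, g a ^ 2 ∂μ) ^ (1 / 2 : ℝ)) ^ 2 :=
        pow_le_pow_left' h 2
    _ = (∫⁻ a, f a ^ 2 ∂μ) * ∫⁻ a, g a ^ 2 ∂μ := by
        simp only [mul_pow, ← rpow_two, ← rpow_mul]
        norm_num

theorem tendsto_sum_Icc_toReal_atTop {f : ℕ → ℝ≥0∞} (hf : ∀ n, f n ≠ ∞) (hsum : ∑' n, f n = ∞) :
    Tendsto (fun n => ∑ k ∈ Finset.Icc 1 n, (f k).toReal) atTop atTop := by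
  have hns : ¬Summable fun n => (f n).toReal := fun hs => by
    simpa [ofReal_toReal (hf _), hsum] using ofReal_tsum_of_nonneg (fun n => toReal_nonneg) hs
  have hrange := (tendsto_add_atTop_iff_nat 1).2
    ((not_summable_iff_tendsto_nat_atTop_of_nonneg fun n => toReal_nonneg).1 hns)
  refine (tendsto_atTop_add_const_left _ (-(f 0).toReal) hrange).congr fun n => ?_
  rw [Finset.range_eq_Ico, Finset.sum_eq_sum_Ico_succ_bot n.succ_pos, zero_add,
    Nat.succ_eq_add_one, Finset.Ico_add_one_right_eq_Icc, neg_add_cancel_left]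

end ENNReal

theorem Real.frequently_lt_of_liminf_lt {ι : Type*} {l : Filter ι} {u : ι → ℝ} {b : ℝ}
    (h0 : l.liminf u ≠ 0) (h : l.liminf u < b) : ∃ᶠ i in l, u i < b := by
  refine Filter.frequently_lt_of_liminf_lt ?_ h
  by_contra hu
  exact h0 (by rw [liminf_eq]; exact Real.sSup_of_not_bddAbove hu)

theorem one_le_of_eventually_sq_sub_le_mul {ι : Type*} {l : Filter ι} {S D : ι → ℝ} {C t : ℝ}
    (hS : Tendsto S l atTop) (hD : l.liminf (fun i => D i / S i ^ 2) = 1) (ht : 0 ≤ t)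
    (h : ∀ᶠ i in l, (S i - C) ^ 2 ≤ D i * t) : 1 ≤ t := by
  by_contra! ht1
  obtain ⟨δ, hδ, hδt⟩ : ∃ δ : ℝ, 0 < δ ∧ (1 + δ) * t < 1 - δ :=
    ⟨(1 - t) / 4, by linarith, by nlinarith⟩
  have hfreq : ∃ᶠ i in l, D i / S i ^ 2 < 1 + δ :=
    Real.frequently_lt_of_liminf_lt (by simp [hD]) (by linarith)
  obtain ⟨i, hDi, hSi, hCi, hi⟩ := (hfreq.and_eventually ((hS.eventually_gt_atTop 0).and
    ((hS.eventually_ge_atTop (2 * C / δ)).and h))).exists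
  rw [div_lt_iff₀ (by positivity)] at hDi
  rw [div_le_iff₀ hδ] at hCi
  have hkey : (1 - δ) * S i ^ 2 ≤ (1 + δ) * t * S i ^ 2 := calc
    (1 - δ) * S i ^ 2 ≤ (S i - C) ^ 2 := by
      nlinarith [mul_le_mul_of_nonneg_left hCi hSi.le, sq_nonneg C]
    _ ≤ D i * t := hi
    _ ≤ (1 + δ) * S i ^ 2 * t := mul_le_mul_of_nonneg_right hDi.le ht
    _ = (1 + δ) * t * S i ^ 2 := by ring
  linarith [le_of_mul_le_mul_right hkey (by positivity)]

namespace MeasureTheory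

variable {Ω : Type*} [MeasurableSpace Ω] (μ : Measure Ω)

section

variable {ι : Type*} {A : ι → Set Ω}

theorem sq_sum_measure_le_mul_measure_biUnion (hA : ∀ i, MeasurableSet (A i)) (s : Finset ι) :
    (∑ k ∈ s, μ (A k)) ^ 2 ≤ (∑ j ∈ s, ∑ k ∈ s, μ (A j ∩ A k)) * μ (⋃ k ∈ s, A k) := by
  set N : Ω → ℝ≥0∞ := fun ω => ∑ k ∈ s, (A k).indicator 1 ω
  set U := ⋃ k ∈ s, A k
  have hU : MeasurableSet U := s.measurableSet_biUnion fun k _ => hA k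
  have hN : Measurable N := Finset.measurable_sum _ fun k _ => measurable_one.indicator (hA k)
  have hmul : ∀ (B C : Set Ω) ω,
      B.indicator (1 : Ω → ℝ≥0∞) ω * C.indicator 1 ω = (B ∩ C).indicator 1 ω :=
    fun B C ω => by rw [inter_indicator_one]; rfl
  have hNU : ∀ ω, N ω * U.indicator 1 ω = N ω := fun ω => by
    simp only [N, Finset.sum_mul, hmul]
    refine Finset.sum_congr rfl fun k hk => ?_
    rw [inter_eq_left.2 (show A k ⊆ U from subset_biUnion_of_mem hk)]
  have hN_sq : ∀ ω, N ω ^ 2 = ∑ j ∈ s, ∑ k ∈ s, (A j ∩ A k).indicator 1 ω := fun ω => by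
    simp only [N, sq, Finset.sum_mul_sum, hmul]
  have hU_sq : ∀ ω, U.indicator (1 : Ω → ℝ≥0∞) ω ^ 2 = U.indicator 1 ω := fun ω => by
    rw [sq, hmul, inter_self]
  calc (∑ k ∈ s, μ (A k)) ^ 2 = (∫⁻ ω, N ω * U.indicator 1 ω ∂μ) ^ 2 := by
        simp only [hNU, N]
        rw [lintegral_finsetSum _ fun k _ => measurable_one.indicator (hA k)]
        simp [lintegral_indicator_one (hA _)]
    _ ≤ (∫⁻ ω, N ω ^ 2 ∂μ) * ∫⁻ ω, U.indicator 1 ω ^ 2 ∂μ :=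
        ENNReal.sq_lintegral_mul_le_mul_lintegral_sq hN.aemeasurable
          (measurable_one.indicator hU).aemeasurable
    _ = (∑ j ∈ s, ∑ k ∈ s, μ (A j ∩ A k)) * μ U := by
        simp only [hN_sq, hU_sq, lintegral_indicator_one hU]
        rw [lintegral_finsetSum _ fun j _ => Finset.measurable_sum _ fun k _ =>
          measurable_one.indicator ((hA j).inter (hA k))]
        simp_rw [lintegral_finsetSum _ fun k _ => measurable_one.indicator ((hA _).inter (hA k)),
          lintegral_indicator_one ((hA _).inter (hA _))]

theorem sq_sum_measure_toReal_le_mul_measure_biUnion [IsFiniteMeasure μ]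
    (hA : ∀ i, MeasurableSet (A i)) (s : Finset ι) :
    (∑ k ∈ s, (μ (A k)).toReal) ^ 2 ≤
      (∑ j ∈ s, ∑ k ∈ s, (μ (A j ∩ A k)).toReal) * (μ (⋃ k ∈ s, A k)).toReal := by
  have h := ENNReal.toReal_mono (by simp [ENNReal.mul_eq_top, measure_ne_top])
    (sq_sum_measure_le_mul_measure_biUnion μ hA s)
  simpa [ENNReal.toReal_sum, measure_ne_top] using h

end

theorem sq_sum_sub_le_mul_measure_iUnion_ge [IsFiniteMeasure μ] {A : ℕ → Set Ω}
    (hA : ∀ i, MeasurableSet (A i)) (s : Finset ℕ) (m : ℕ)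
    (hm : ∑ k ∈ Finset.range m, (μ (A k)).toReal ≤ ∑ k ∈ s, (μ (A k)).toReal) :
    (∑ k ∈ s, (μ (A k)).toReal - ∑ k ∈ Finset.range m, (μ (A k)).toReal) ^ 2 ≤
      (∑ j ∈ s, ∑ k ∈ s, (μ (A j ∩ A k)).toReal) * (μ (⋃ i ≥ m, A i)).toReal := by
  set s' := s \ Finset.range m
  have hs' : s' ⊆ s := Finset.sdiff_subset
  have hsum : ∑ k ∈ s, (μ (A k)).toReal - ∑ k ∈ Finset.range m, (μ (A k)).toReal ≤
      ∑ k ∈ s', (μ (A k)).toReal := by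
    rw [← Finset.sum_inter_add_sum_sdiff s (Finset.range m), add_comm, sub_le_iff_le_add]
    exact add_le_add_right (Finset.sum_le_sum_of_subset_of_nonneg Finset.inter_subset_right
      fun _ _ _ => ENNReal.toReal_nonneg) _
  have hpairs : ∑ j ∈ s', ∑ k ∈ s', (μ (A j ∩ A k)).toReal ≤
      ∑ j ∈ s, ∑ k ∈ s, (μ (A j ∩ A k)).toReal := by
    simp only [← Finset.sum_product']
    exact Finset.sum_le_sum_of_subset_of_nonneg (Finset.product_subset_product hs' hs')
      fun _ _ _ => ENNReal.toReal_nonneg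
  have htail : ⋃ k ∈ s', A k ⊆ ⋃ i ≥ m, A i := by
    intro ω
    simp only [mem_iUnion, s', Finset.mem_sdiff, Finset.mem_range, not_lt]
    exact fun ⟨k, ⟨_, hk⟩, hω⟩ => ⟨k, hk, hω⟩
  calc _ ≤ (∑ k ∈ s', (μ (A k)).toReal) ^ 2 := pow_le_pow_left₀ (sub_nonneg.2 hm) hsum 2
    _ ≤ _ := sq_sum_measure_toReal_le_mul_measure_biUnion μ hA s'
    _ ≤ _ := mul_le_mul hpairs (ENNReal.toReal_mono (measure_ne_top μ _) (measure_mono htail))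
        ENNReal.toReal_nonneg (by positivity)

end MeasureTheory

theorem stmt8 {Ω : Type*} [MeasurableSpace Ω] (P : Measure Ω) [IsProbabilityMeasure P]
    (A : ℕ → Set Ω) (hA : ∀ n, MeasurableSet (A n))
    (hdiv : (∑' n, P (A n)) = ⊤)
    (hliminf : Filter.atTop.liminf (fun n =>
      (∑ j ∈ Finset.Icc 1 n, ∑ k ∈ Finset.Icc 1 n, (P (A j ∩ A k)).toReal) /
        (∑ j ∈ Finset.Icc 1 n, (P (A j)).toReal) ^ 2) = 1) :
    P (Filter.limsup A Filter.atTop) = 1 := by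
  have hS := ENNReal.tendsto_sum_Icc_toReal_atTop (fun n => measure_ne_top P (A n)) hdiv
  have htail : ∀ m, ∀ᵐ ω ∂P, ω ∈ ⋃ i ≥ m, A i := fun m => by
    have h : 1 ≤ (P (⋃ i ≥ m, A i)).toReal :=
      one_le_of_eventually_sq_sub_le_mul hS hliminf ENNReal.toReal_nonneg <| by
        filter_upwards [hS.eventually_ge_atTop (∑ k ∈ Finset.range m, (P (A k)).toReal)]
          with n hn using sq_sum_sub_le_mul_measure_iUnion_ge P hA _ m hn
    have hmeas : MeasurableSet (⋃ i ≥ m, A i) := .iUnion fun i => .iUnion fun _ => hA i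
    rw [ae_mem_iff_measure_eq hmeas.nullMeasurableSet, measure_univ]
    exact le_antisymm prob_le_one (by simpa using ENNReal.ofReal_le_of_le_toReal h)
  have hlimsup := (MeasurableSet.measurableSet_limsup hA).nullMeasurableSet (μ := P)
  refine ((ae_mem_iff_measure_eq hlimsup).1 ?_).trans measure_univ
  filter_upwards [ae_all_iff.2 htail] with ω hω
  rw [mem_limsup_iff_frequently_mem, frequently_atTop]
  simpa using hω
end

section
/- Let f: [0,∞) → ℝ be a continuous function and let φ(h) = c √(h^{2H} log(1/h)) with c > 0, 0 < H < 1. Suppose that for every rational interval [a,b] ⊂ (0,∞) with a < b, limsup_{h→0+} sup_{λ∈[a,b]} |f(λ+h) - f(λ)| / √(h^{2H} log(1/h)) ≥ 2c. Then there exists λ* ∈ [1,2] such that limsup_{h→0+} |f(λ*+h) - f(λ*)| / √(h^{2H} log log(1/h)) = ∞. -/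
open Filter

-- Auxiliary: x / log x → ∞ at ∞
lemma aux_div_log_atTop : Tendsto (fun y : ℝ => y / Real.log y) atTop atTop := by
  rw [tendsto_atTop]
  intro b
  rcases le_or_gt b 0 with hb | hb
  · filter_upwards [eventually_ge_atTop (1:ℝ),
      Real.tendsto_log_atTop.eventually_ge_atTop 1] with y hy hlog
    exact hb.trans (div_nonneg (by linarith) (by linarith))
  · have hO := Real.isLittleO_log_id_atTop.def (c := 1 / (2 * b)) (by positivity)
    filter_upwards [hO, eventually_ge_atTop (0:ℝ),
      Real.tendsto_log_atTop.eventually_ge_atTop 1] with y hy hy0 hlog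
    simp only [Real.norm_eq_abs, id_eq] at hy
    rw [abs_of_nonneg (by linarith : (0:ℝ) ≤ Real.log y), abs_of_nonneg hy0] at hy
    rw [le_div_iff₀ (by linarith : (0:ℝ) < Real.log y)]
    have h1 : b * Real.log y ≤ b * (1 / (2 * b) * y) := mul_le_mul_of_nonneg_left hy hb.le
    have h2 : b * (1 / (2 * b) * y) = y / 2 := by field_simp
    linarith

-- Key step: find a rational subinterval and a small h with large oscillation everywhere
lemma key13 (f : ℝ → ℝ) (hf : ContinuousOn f (Set.Ici 0))
    (c H : ℝ) (hc : 0 < c)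
    (hosc : ∀ a b : ℚ, 0 < a → a < b →
      ((2 * c : ℝ) : EReal) ≤ Filter.limsup (fun h : ℝ =>
        (((⨆ lam ∈ Set.Icc (a:ℝ) (b:ℝ), |f (lam + h) - f lam|) /
          Real.sqrt (h ^ (2 * H) * Real.log (1 / h)) : ℝ) : EReal))
        (nhdsWithin 0 (Set.Ioi 0)))
    (a b : ℚ) (ha : 0 < a) (hab : a < b) (ε : ℝ) (hε : 0 < ε) :
    ∃ a' b' : ℚ, ∃ h : ℝ, a ≤ a' ∧ a' < b' ∧ b' ≤ b ∧ 0 < h ∧ h < ε ∧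
      ∀ lam : ℝ, (a':ℝ) ≤ lam → lam ≤ (b':ℝ) →
        c * Real.sqrt (h ^ (2 * H) * Real.log (1 / h)) ≤ |f (lam + h) - f lam| := by
  have haR : (0:ℝ) < (a:ℝ) := by exact_mod_cast ha
  have habR : (a:ℝ) < (b:ℝ) := by exact_mod_cast hab
  -- Step 1: frequently the sup-ratio exceeds c
  have hfreq : ∃ᶠ h in nhdsWithin (0:ℝ) (Set.Ioi 0),
      c < (⨆ lam ∈ Set.Icc (a:ℝ) (b:ℝ), |f (lam + h) - f lam|) /
          Real.sqrt (h ^ (2 * H) * Real.log (1 / h)) := by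
    by_contra hcon
    rw [Filter.not_frequently] at hcon
    have hev : ∀ᶠ h in nhdsWithin (0:ℝ) (Set.Ioi 0),
        (((⨆ lam ∈ Set.Icc (a:ℝ) (b:ℝ), |f (lam + h) - f lam|) /
          Real.sqrt (h ^ (2 * H) * Real.log (1 / h)) : ℝ) : EReal) ≤ ((c:ℝ) : EReal) := by
      filter_upwards [hcon] with h hh
      exact_mod_cast not_lt.mp hh
    have hle := Filter.limsup_le_of_le (f := nhdsWithin (0:ℝ) (Set.Ioi 0)) (h := hev)
    have := (hosc a b ha hab).trans hle
    rw [EReal.coe_le_coe_iff] at this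
    linarith
  -- Step 2: pick h in (0, min ε (1/2)) with the sup-ratio > c
  obtain ⟨h, hhU, hhc⟩ := Filter.frequently_iff.mp hfreq
    (Ioo_mem_nhdsGT_of_mem (by constructor <;> simp [hε] : (0:ℝ) ∈ Set.Ico (0:ℝ) (min ε (1/2))))
  obtain ⟨hh0, hhε'⟩ := hhU
  have hhε : h < ε := lt_of_lt_of_le hhε' (min_le_left _ _)
  have hh1 : h < 1/2 := lt_of_lt_of_le hhε' (min_le_right _ _)
  have hs : 0 < Real.sqrt (h ^ (2 * H) * Real.log (1 / h)) := by
    apply Real.sqrt_pos.mpr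
    apply mul_pos (Real.rpow_pos_of_pos hh0 _)
    apply Real.log_pos
    rw [lt_div_iff₀ hh0]; linarith
  set s := Real.sqrt (h ^ (2 * H) * Real.log (1 / h)) with hs_def
  have hsup : c * s < ⨆ lam ∈ Set.Icc (a:ℝ) (b:ℝ), |f (lam + h) - f lam| :=
    (lt_div_iff₀ hs).mp hhc
  -- Step 3: get a point lam where oscillation is big
  have hex : ∃ lam ∈ Set.Icc (a:ℝ) (b:ℝ), c * s < |f (lam + h) - f lam| := by
    by_contra hcon
    push_neg at hcon
    have hcs : (0:ℝ) ≤ c * s := by positivity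
    have : (⨆ lam ∈ Set.Icc (a:ℝ) (b:ℝ), |f (lam + h) - f lam|) ≤ c * s := by
      refine Real.iSup_le (fun lam => ?_) hcs
      by_cases hmem : lam ∈ Set.Icc (a:ℝ) (b:ℝ)
      · rw [ciSup_pos hmem]; exact hcon lam hmem
      · simp [hmem, hcs]
    linarith
  obtain ⟨lam, hlam, hbig⟩ := hex
  have hlam0 : 0 < lam := lt_of_lt_of_le haR hlam.1
  -- Step 4: continuity gives a ball around lam
  have hg : ContinuousAt (fun x => |f (x + h) - f x|) lam := by
    have h1 : ContinuousAt f lam := hf.continuousAt (Ici_mem_nhds hlam0)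
    have h2 : ContinuousAt f (lam + h) := hf.continuousAt (Ici_mem_nhds (by linarith))
    have hadd : ContinuousAt (fun x : ℝ => x + h) lam := (continuous_add_right h).continuousAt
    have h3 : ContinuousAt (fun x : ℝ => f (x + h)) lam := ContinuousAt.comp (x := lam) h2 hadd
    exact (h3.sub h1).abs
  have hmem : (fun x => |f (x + h) - f x|) ⁻¹' Set.Ioi (c * s) ∈ nhds lam :=
    hg (Ioi_mem_nhds hbig)
  obtain ⟨δ, hδ0, hball⟩ := Metric.mem_nhds_iff.mp hmem
  -- Step 5: rational subinterval
  set l := max (a:ℝ) (lam - δ) with hl_def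
  set r := min (b:ℝ) (lam + δ) with hr_def
  have hlr : l < r := by
    apply max_lt_iff.mpr
    constructor
    · exact lt_min habR (by linarith [hlam.1])
    · exact lt_min (by linarith [hlam.2]) (by linarith)
  obtain ⟨q1, hq1l, hq1r⟩ := exists_rat_btwn hlr
  obtain ⟨q2, hq21, hq2r⟩ := exists_rat_btwn hq1r
  refine ⟨q1, q2, h, ?_, ?_, ?_, hh0, hhε, ?_⟩
  · have : (a:ℝ) ≤ (q1:ℝ) := le_of_lt (lt_of_le_of_lt (le_max_left _ _) hq1l)
    exact_mod_cast this
  · exact_mod_cast hq21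
  · have : (q2:ℝ) ≤ (b:ℝ) := le_of_lt (lt_of_lt_of_le hq2r (min_le_left _ _))
    exact_mod_cast this
  · intro lam' h1 h2
    have hin : lam' ∈ Metric.ball lam δ := by
      rw [Metric.mem_ball, Real.dist_eq, abs_sub_lt_iff]
      have e1 : lam - δ ≤ l := le_max_right _ _
      have e2 : r ≤ lam + δ := min_le_right _ _
      constructor <;> nlinarith [hq1l, hq2r, hq21]
    exact le_of_lt (hball hin)

theorem stmt13 (f : ℝ → ℝ) (hf : ContinuousOn f (Set.Ici 0))
    (c H : ℝ) (hc : 0 < c) (hH0 : 0 < H) (hH1 : H < 1)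
    (hosc : ∀ a b : ℚ, 0 < a → a < b →
      ((2 * c : ℝ) : EReal) ≤ Filter.limsup (fun h : ℝ =>
        (((⨆ lam ∈ Set.Icc (a:ℝ) (b:ℝ), |f (lam + h) - f lam|) /
          Real.sqrt (h ^ (2 * H) * Real.log (1 / h)) : ℝ) : EReal))
        (nhdsWithin 0 (Set.Ioi 0))) :
    ∃ lam₀ ∈ Set.Icc (1:ℝ) 2,
      Filter.limsup (fun h : ℝ =>
        ((|f (lam₀ + h) - f lam₀| /
          Real.sqrt (h ^ (2 * H) * Real.log (Real.log (1 / h))) : ℝ) : EReal))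
        (nhdsWithin 0 (Set.Ioi 0)) = ⊤ := by
  classical
  -- nested interval recursion
  have key2 : ∀ (p : {q : ℚ × ℚ // 0 < q.1 ∧ q.1 < q.2}) (n : ℕ),
      ∃ p' : {q : ℚ × ℚ // 0 < q.1 ∧ q.1 < q.2}, ∃ h : ℝ,
        p.1.1 ≤ p'.1.1 ∧ p'.1.2 ≤ p.1.2 ∧ 0 < h ∧ h < 1/(n+1) ∧
        ∀ lam : ℝ, ((p'.1.1:ℚ):ℝ) ≤ lam → lam ≤ ((p'.1.2:ℚ):ℝ) →
          c * Real.sqrt (h ^ (2 * H) * Real.log (1 / h)) ≤ |f (lam + h) - f lam| := by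
    rintro ⟨⟨a, b⟩, ha, hab⟩ n
    obtain ⟨a', b', h, h1, h2, h3, h4, h5, h6⟩ :=
      key13 f hf c H hc hosc a b ha hab (1/(n+1)) (by positivity)
    exact ⟨⟨(a', b'), lt_of_lt_of_le ha h1, h2⟩, h, h1, h3, h4, h5, h6⟩
  set G : ℕ → {q : ℚ × ℚ // 0 < q.1 ∧ q.1 < q.2} :=
    fun n => Nat.rec ⟨(1, 2), by norm_num⟩ (fun n p => (key2 p n).choose) n with hG_def
  have hGsucc : ∀ n, G (n+1) = (key2 (G n) n).choose := fun n => rfl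
  set A : ℕ → ℝ := fun n => ((G n).1.1 : ℝ) with hA_def
  set B : ℕ → ℝ := fun n => ((G n).1.2 : ℝ) with hB_def
  -- the h-sequence and its properties
  have spec : ∀ n : ℕ, ∃ h : ℝ, 0 < h ∧ h < 1/(n+1) ∧ A n ≤ A (n+1) ∧ B (n+1) ≤ B n ∧
      ∀ lam : ℝ, A (n+1) ≤ lam → lam ≤ B (n+1) →
        c * Real.sqrt (h ^ (2 * H) * Real.log (1 / h)) ≤ |f (lam + h) - f lam| := by
    intro n
    obtain ⟨h, h1, h2, h3, h4, h5⟩ := (key2 (G n) n).choose_spec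
    rw [← hGsucc n] at h1 h2 h5
    exact ⟨h, h3, h4, by simp only [hA_def]; exact_mod_cast h1, by simp only [hB_def]; exact_mod_cast h2, h5⟩
  choose hs hs0 hslt hsA hsB hsosc using spec
  have hAmono : Monotone A := monotone_nat_of_le_succ hsA
  have hBanti : Antitone B := antitone_nat_of_succ_le hsB
  have hAB : ∀ n, A n < B n := fun n => by simp only [hA_def, hB_def]; exact_mod_cast (G n).2.2
  have hAleB : ∀ n m, A n ≤ B m := by
    intro n m
    calc A n ≤ A (max n m) := hAmono (le_max_left _ _)
    _ ≤ B (max n m) := (hAB _).le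
    _ ≤ B m := hBanti (le_max_right _ _)
  have hbdd : BddAbove (Set.range A) := ⟨B 0, by rintro x ⟨n, rfl⟩; exact hAleB n 0⟩
  set lam₀ : ℝ := ⨆ n, A n with hlam₀_def
  have hlamA : ∀ n, A n ≤ lam₀ := fun n => le_ciSup hbdd n
  have hlamB : ∀ n, lam₀ ≤ B n := fun n => ciSup_le (fun m => hAleB m n)
  have hA0 : A 0 = 1 := by norm_num [hA_def, hG_def]
  have hB0 : B 0 = 2 := by norm_num [hB_def, hG_def]
  have hlam₀pos : (0:ℝ) < lam₀ := lt_of_lt_of_le (by norm_num) (hA0 ▸ hlamA 0)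
  refine ⟨lam₀, ⟨hA0 ▸ hlamA 0, hB0 ▸ hlamB 0⟩, ?_⟩
  -- key oscillation at lam₀
  have hosc₀ : ∀ n, c * Real.sqrt ((hs n) ^ (2 * H) * Real.log (1 / hs n)) ≤
      |f (lam₀ + hs n) - f lam₀| := fun n => hsosc n lam₀ (hlamA (n+1)) (hlamB (n+1))
  -- limsup = ⊤
  rw [EReal.eq_top_iff_forall_lt]
  intro M
  have step1 : ((M : ℝ) : EReal) < (((M + 1 : ℝ)) : EReal) := by exact_mod_cast lt_add_one M
  refine lt_of_lt_of_le step1 ?_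
  apply Filter.le_limsup_of_frequently_le'
  rw [Filter.frequently_iff]
  intro U hU
  obtain ⟨u, hu, hsub⟩ := mem_nhdsGT_iff_exists_Ioo_subset.mp hU
  -- asymptotic: log(1/h)/loglog(1/h) → ∞
  set M' : ℝ := max (M+1) 1 with hM'_def
  have hM'pos : (0:ℝ) < M' := lt_of_lt_of_le one_pos (le_max_right _ _)
  have hT : Tendsto (fun h : ℝ => Real.log (1/h) / Real.log (Real.log (1/h)))
      (nhdsWithin 0 (Set.Ioi 0)) atTop := by
    have t1 : Tendsto (fun h : ℝ => 1/h) (nhdsWithin (0:ℝ) (Set.Ioi 0)) atTop := by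
      simpa [one_div] using tendsto_inv_nhdsGT_zero (𝕜 := ℝ)
    exact aux_div_log_atTop.comp (Real.tendsto_log_atTop.comp t1)
  have hev := hT.eventually_ge_atTop (M'^2 / c^2)
  obtain ⟨u₂, hu₂, hsub₂⟩ := mem_nhdsGT_iff_exists_Ioo_subset.mp hev
  -- pick n with 1/(n+1) small
  set ε : ℝ := min (min u u₂) (Real.exp (-Real.exp 1)) with hε_def
  have hεpos : 0 < ε := by
    apply lt_min (lt_min hu hu₂) (Real.exp_pos _)
  obtain ⟨n, hn⟩ := exists_nat_one_div_lt hεpos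
  set h := hs n with hh_def
  have hh0 : 0 < h := hs0 n
  have hhε : h < ε := lt_of_lt_of_le (hslt n) (by exact_mod_cast hn.le)
  have hhu : h ∈ Set.Ioo (0:ℝ) u :=
    ⟨hh0, lt_of_lt_of_le hhε ((min_le_left _ _).trans (min_le_left _ _))⟩
  have hhu₂ : h ∈ Set.Ioo (0:ℝ) u₂ :=
    ⟨hh0, lt_of_lt_of_le hhε ((min_le_left _ _).trans (min_le_right _ _))⟩
  have hhe : h < Real.exp (-Real.exp 1) := lt_of_lt_of_le hhε (min_le_right _ _)
  refine ⟨h, hsub hhu, ?_⟩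
  -- now the estimate
  set L : ℝ := Real.log (1/h) with hL_def
  set LL : ℝ := Real.log L with hLL_def
  have hLbig : Real.exp 1 < L := by
    rw [hL_def]
    calc Real.exp 1 = Real.log (Real.exp (Real.exp 1)) := (Real.log_exp _).symm
    _ < Real.log (1/h) := by
        apply Real.log_lt_log (Real.exp_pos _)
        rw [lt_div_iff₀ hh0]
        calc Real.exp (Real.exp 1) * h < Real.exp (Real.exp 1) * Real.exp (-Real.exp 1) := by
              exact mul_lt_mul_of_pos_left hhe (Real.exp_pos _)
        _ = 1 := by rw [← Real.exp_add]; simp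
  have hL1 : 1 < L := lt_trans (by calc (1:ℝ) = Real.exp 0 := (Real.exp_zero).symm
    _ < Real.exp 1 := Real.exp_lt_exp.mpr one_pos) hLbig
  have hLL0 : 0 < LL := Real.log_pos hL1
  have hratio : M'^2 / c^2 ≤ L / LL := hsub₂ hhu₂
  have hP : 0 < h ^ (2 * H) := Real.rpow_pos_of_pos hh0 _
  have hkey : M'^2 * (h ^ (2 * H) * LL) ≤ c^2 * (h ^ (2 * H) * L) := by
    have h1 : M'^2 * LL ≤ c^2 * L := by
      rw [div_le_div_iff₀ (by positivity) hLL0] at hratio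
      nlinarith
    nlinarith
  have hsqLL : 0 < Real.sqrt (h ^ (2 * H) * LL) := by
    apply Real.sqrt_pos.mpr; positivity
  have hchain : M' * Real.sqrt (h ^ (2 * H) * LL) ≤ c * Real.sqrt (h ^ (2 * H) * L) := by
    have e1 : M' * Real.sqrt (h ^ (2 * H) * LL) = Real.sqrt (M'^2 * (h ^ (2 * H) * LL)) := by
      rw [Real.sqrt_mul (sq_nonneg _), Real.sqrt_sq hM'pos.le]
    have e2 : c * Real.sqrt (h ^ (2 * H) * L) = Real.sqrt (c^2 * (h ^ (2 * H) * L)) := by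
      rw [Real.sqrt_mul (sq_nonneg _), Real.sqrt_sq hc.le]
    rw [e1, e2]
    exact Real.sqrt_le_sqrt hkey
  have hfinal : M + 1 ≤ |f (lam₀ + h) - f lam₀| / Real.sqrt (h ^ (2 * H) * LL) := by
    rw [le_div_iff₀ hsqLL]
    calc (M+1) * Real.sqrt (h ^ (2 * H) * LL) ≤ M' * Real.sqrt (h ^ (2 * H) * LL) := by
          exact mul_le_mul_of_nonneg_right (le_max_left _ _) hsqLL.le
    _ ≤ c * Real.sqrt (h ^ (2 * H) * L) := hchain
    _ ≤ |f (lam₀ + h) - f lam₀| := hosc₀ n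
  exact_mod_cast hfinal
end
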